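/- Let {D_I}_{I∈({1,...,n} choose 2)} be a family of positive real numbers satisfying the triangle inequalities. The family is co-graphlike (i.e., realized as the family of 2-weights of a pruned positive-weighted complete graph on vertex set {1,...,n}) if and only if D_{i,j} is indecomposable for all distinct i,j ∈ {1,...,n}. -/

import Mathlib

/-
If the edge `ij` is useful, every shortest path between some `a` and `b` uses it. When
`D i j ≥ D i z + D z j`, replacing `ij` in one such path by shortest paths `i → z → j` and
shortcutting gives a path that is no heavier, hence also shortest, yet avoids `ij`: both detour
pieces are strictly lighter than `D i j ≤ w(ij)`. Conversely, if every
`D i j` is indecomposable, the complete graph with `w(ij) = D i j` realizes `D` by the triangle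
inequalities, and the edge `ij` is the only shortest path from `i` to `j`.
-/

open SimpleGraph

variable {V : Type*}

/-- weight of a walk: sum of the weights of its edges -/
noncomputable def walkWeight (G : SimpleGraph V) (w : Sym2 V → ℝ) {i j : V} (p : G.Walk i j) : ℝ :=
  (p.edges.map w).sum

/-- the 2-weight: min over paths joining i and j -/
noncomputable def wdist (G : SimpleGraph V) (w : Sym2 V → ℝ) (i j : V) : ℝ :=
  sInf {x : ℝ | ∃ p : G.Walk i j, p.IsPath ∧ walkWeight G w p = x}

def Realizes (G : SimpleGraph V) (w : Sym2 V → ℝ) {i j : V} (p : G.Walk i j) : Prop :=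
  p.IsPath ∧ walkWeight G w p = wdist G w i j

def UsefulEdge (G : SimpleGraph V) (w : Sym2 V → ℝ) (e : Sym2 V) : Prop :=
  ∃ a b : V, a ≠ b ∧ ∀ p : G.Walk a b, Realizes G w p → e ∈ p.edges

def Pruned (G : SimpleGraph V) (w : Sym2 V → ℝ) : Prop :=
  ∀ e ∈ G.edgeSet, UsefulEdge G w e

def PosWeights (G : SimpleGraph V) (w : Sym2 V → ℝ) : Prop :=
  ∀ e ∈ G.edgeSet, 0 < w e

def Indec (G : SimpleGraph V) (w : Sym2 V → ℝ) (i j : V) : Prop :=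
  ∀ z : V, z ≠ i → z ≠ j → wdist G w i j < wdist G w i z + wdist G w z j

def IsLeaf (G : SimpleGraph V) (v : V) : Prop := (G.neighborSet v).ncard = 1

def IsSnake (G : SimpleGraph V) : Prop :=
  G.IsTree ∧ {v : V | IsLeaf G v}.ncard = 2

def IsCaterpillar (G : SimpleGraph V) : Prop :=
  G.IsTree ∧ ∃ (x₁ x₂ : V) (p : G.Walk x₁ x₂), p.IsPath ∧
    {v : V | v ∈ p.support} = {v : V | 2 ≤ (G.neighborSet v).ncard}

def IsPolygon {n : ℕ} [NeZero n] (G : SimpleGraph (Fin n)) : Prop :=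
  ∃ σ : Equiv.Perm (Fin n), G.edgeSet = Set.range (fun i : Fin n => s(σ i, σ (i + 1)))

noncomputable def tmin (G : SimpleGraph V) (w : Sym2 V → ℝ) (x : V) : ℝ :=
  (1 / 2) * sInf {r : ℝ | ∃ y z : V, y ≠ x ∧ z ≠ x ∧ y ≠ z ∧
    r = wdist G w x y + wdist G w x z - wdist G w y z}

def IsBipartiteOn (G : SimpleGraph V) (X Y : Set V) : Prop :=
  X ∩ Y = ∅ ∧ X ∪ Y = Set.univ ∧ ∀ a b : V, G.Adj a b → (a ∈ X ∧ b ∈ Y) ∨ (a ∈ Y ∧ b ∈ X)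

noncomputable def chainSum {α : Type*} (D : α → α → ℝ) : List α → ℝ
  | [] => 0
  | [_] => 0
  | a :: b :: l => D a b + chainSum D (b :: l)

def FIndec {n : ℕ} (D : Fin n → Fin n → ℝ) (i j : Fin n) : Prop :=
  ∀ z : Fin n, z ≠ i → z ≠ j → D i j < D i z + D z j

def TriangleIneq {n : ℕ} (D : Fin n → Fin n → ℝ) : Prop :=
  ∀ i j k : Fin n, i ≠ j → j ≠ k → i ≠ k → D i j ≤ D i k + D k j

def MaxTwice (x y z : ℝ) : Prop :=
  (x = y ∧ z ≤ x) ∨ (x = z ∧ y ≤ x) ∨ (y = z ∧ x ≤ y)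

def FourPoint {n : ℕ} (D : Fin n → Fin n → ℝ) : Prop :=
  ∀ i j k h : Fin n, i ≠ j → i ≠ k → i ≠ h → j ≠ k → j ≠ h → k ≠ h →
    MaxTwice (D i j + D k h) (D i k + D j h) (D i h + D k j)

def MedianFamily {n : ℕ} (D : Fin n → Fin n → ℝ) : Prop :=
  ∀ a b c : Fin n, ∃! m : Fin n,
    ∀ i ∈ ({a, b, c} : Set (Fin n)), ∀ j ∈ ({a, b, c} : Set (Fin n)), i ≠ j →
      D i j = D i m + D j m

noncomputable def tminF {n : ℕ} (D : Fin n → Fin n → ℝ) (x : Fin n) : ℝ :=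
  (1 / 2) * sInf {r : ℝ | ∃ y z : Fin n, y ≠ x ∧ z ≠ x ∧ y ≠ z ∧ r = D x y + D x z - D y z}

def interiorSet {G : SimpleGraph V} {u v : V} (p : G.Walk u v) : Set V :=
  {x : V | x ∈ p.support ∧ x ≠ u ∧ x ≠ v}

section WalkWeight

variable {G : SimpleGraph V} {w : Sym2 V → ℝ}

lemma walkWeight_cons {a b c : V} (h : G.Adj a b) (p : G.Walk b c) :
    walkWeight G w (Walk.cons h p) = w s(a, b) + walkWeight G w p := by
  simp [walkWeight]

lemma walkWeight_append {a b c : V} (p : G.Walk a b) (q : G.Walk b c) :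
    walkWeight G w (p.append q) = walkWeight G w p + walkWeight G w q := by
  simp [walkWeight, Walk.edges_append]

lemma walkWeight_reverse {a b : V} (p : G.Walk a b) :
    walkWeight G w p.reverse = walkWeight G w p := by
  simp [walkWeight, Walk.edges_reverse, List.sum_reverse]

lemma walkWeight_adj_toWalk {a b : V} (h : G.Adj a b) :
    walkWeight G w h.toWalk = w s(a, b) := by
  simp [walkWeight]

lemma le_walkWeight_of_mem_edges (hw : PosWeights G w) {a b : V} {p : G.Walk a b}
    {e : Sym2 V} (he : e ∈ p.edges) : w e ≤ walkWeight G w p :=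
  List.single_le_sum (by simpa using fun e he => (hw e (p.edges_subset_edgeSet he)).le) _
    (List.mem_map_of_mem he)

lemma walkWeight_nonneg (hw : PosWeights G w) {a b : V} (p : G.Walk a b) :
    0 ≤ walkWeight G w p :=
  List.sum_nonneg (by simpa using fun e he => (hw e (p.edges_subset_edgeSet he)).le)

lemma walkWeight_pos_of_ne (hw : PosWeights G w) {a b : V} (hab : a ≠ b) (p : G.Walk a b) :
    0 < walkWeight G w p := by
  cases p with
  | nil => exact absurd rfl hab
  | cons h q =>
    rw [walkWeight_cons]
    exact add_pos_of_pos_of_nonneg (hw _ h) (walkWeight_nonneg hw q)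

lemma walkWeight_bypass_le [DecidableEq V] (hw : PosWeights G w) {a b : V} (p : G.Walk a b) :
    walkWeight G w p.bypass ≤ walkWeight G w p :=
  (p.edges_bypass_sublist_edges.map w).sum_le_sum
    (by simpa using fun e he => (hw e (p.edges_subset_edgeSet he)).le)

lemma SimpleGraph.Walk.exists_eq_append_cons_of_mem_edges {a b : V} {e : Sym2 V} (p : G.Walk a b)
    (he : e ∈ p.edges) :
    ∃ (x y : V) (h : G.Adj x y) (q : G.Walk a x) (r : G.Walk y b),
      s(x, y) = e ∧ p = q.append (Walk.cons h r) := by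
  induction p with
  | nil => simp at he
  | cons h p ih =>
    rcases List.mem_cons.mp (Walk.edges_cons h p ▸ he) with rfl | he
    · exact ⟨_, _, h, Walk.nil, p, rfl, rfl⟩
    · obtain ⟨x, y, hxy, q, r, rfl, rfl⟩ := ih he
      exact ⟨x, y, hxy, Walk.cons h q, r, rfl, rfl⟩

lemma SimpleGraph.Walk.IsPath.not_mem_edges_of_append_cons {a b x y : V} {q : G.Walk a x}
    {r : G.Walk y b} {h : G.Adj x y} (hp : (q.append (Walk.cons h r)).IsPath) :
    s(x, y) ∉ q.edges ∧ s(x, y) ∉ r.edges := by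
  have hnd := hp.edges_nodup
  rw [Walk.edges_append, Walk.edges_cons, List.nodup_append, List.nodup_cons] at hnd
  exact ⟨fun hq => hnd.2.2 _ hq _ List.mem_cons_self rfl, hnd.2.1.1⟩

end WalkWeight

section Wdist

variable {G : SimpleGraph V} {w : Sym2 V → ℝ}

lemma wdist_comm (a b : V) : wdist G w a b = wdist G w b a := by
  unfold wdist
  congr 1
  ext x
  constructor <;> rintro ⟨p, hp, rfl⟩ <;>
    exact ⟨p.reverse, p.isPath_reverse_iff.mpr hp, walkWeight_reverse p⟩

variable [Finite V]

lemma finite_pathWeights (a b : V) :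
    {x : ℝ | ∃ p : G.Walk a b, p.IsPath ∧ walkWeight G w p = x}.Finite := by
  classical
  have := Fintype.ofFinite V
  refine (Set.finite_range fun p : G.Path a b => walkWeight G w (p : G.Walk a b)).subset ?_
  rintro _ ⟨p, hp, rfl⟩
  exact ⟨⟨p, hp⟩, rfl⟩

lemma wdist_le_walkWeight {a b : V} {p : G.Walk a b} (hp : p.IsPath) :
    wdist G w a b ≤ walkWeight G w p :=
  csInf_le (finite_pathWeights a b).bddBelow ⟨p, hp, rfl⟩

lemma wdist_le_of_adj {a b : V} (h : G.Adj a b) : wdist G w a b ≤ w s(a, b) :=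
  walkWeight_adj_toWalk (w := w) h ▸ wdist_le_walkWeight h.isPath_toWalk

lemma SimpleGraph.Reachable.exists_realizes {a b : V} (h : G.Reachable a b) :
    ∃ p : G.Walk a b, Realizes G w p := by
  obtain ⟨p, hp⟩ := h.exists_isPath
  obtain ⟨q, hq, hqw⟩ := Set.Nonempty.csInf_mem
    (s := {x : ℝ | ∃ p : G.Walk a b, p.IsPath ∧ walkWeight G w p = x}) ⟨_, p, hp, rfl⟩
    (finite_pathWeights a b)
  exact ⟨q, hq, hqw⟩

lemma wdist_pos (hw : PosWeights G w) {a b : V} (hab : a ≠ b) (h : G.Reachable a b) :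
    0 < wdist G w a b := by
  obtain ⟨p, -, hpw⟩ := h.exists_realizes (w := w)
  exact hpw ▸ walkWeight_pos_of_ne hw hab p

lemma realizes_bypass_of_walkWeight_le [DecidableEq V] (hw : PosWeights G w) {a b : V}
    {p : G.Walk a b} (hp : walkWeight G w p ≤ wdist G w a b) : Realizes G w p.bypass :=
  ⟨p.bypass_isPath,
    le_antisymm ((walkWeight_bypass_le hw p).trans hp) (wdist_le_walkWeight p.bypass_isPath)⟩

lemma Realizes.bypass_detour [DecidableEq V] (hw : PosWeights G w) {a b x y : V}
    {q : G.Walk a x} {r : G.Walk y b} {h : G.Adj x y} (hp : Realizes G w (q.append (.cons h r)))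
    (s : G.Walk x y) (hs : walkWeight G w s ≤ w s(x, y)) :
    Realizes G w (q.append (s.append r)).bypass := by
  refine realizes_bypass_of_walkWeight_le hw ?_
  rw [← hp.2, walkWeight_append, walkWeight_append, walkWeight_append, walkWeight_cons]
  linarith

theorem UsefulEdge.wdist_lt_add (hG : G.Preconnected) (hw : PosWeights G w) {x y z : V}
    (huse : UsefulEdge G w s(x, y)) (hzx : z ≠ x) (hzy : z ≠ y) :
    wdist G w x y < wdist G w x z + wdist G w z y := by
  classical
  by_contra! hle
  obtain ⟨a, b, -, hall⟩ := huse
  obtain ⟨p, hp⟩ := (hG a b).exists_realizes (w := w)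
  obtain ⟨x', y', h, q, r, hxy, rfl⟩ := p.exists_eq_append_cons_of_mem_edges (hall _ hp)
  rw [← hxy] at hall
  obtain ⟨hzx', hzy', hdetour⟩ : z ≠ x' ∧ z ≠ y' ∧
      wdist G w x' z + wdist G w z y' ≤ wdist G w x' y' := by
    rcases Sym2.eq_iff.mp hxy with ⟨rfl, rfl⟩ | ⟨rfl, rfl⟩
    · exact ⟨hzx, hzy, hle⟩
    · refine ⟨hzy, hzx, ?_⟩
      rw [wdist_comm x' z, wdist_comm z y', wdist_comm x' y']
      linarith
  have hedge := wdist_le_of_adj (w := w) h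
  have hz₁ := wdist_pos hw hzx'.symm (hG x' z) (w := w)
  have hz₂ := wdist_pos hw hzy' (hG z y') (w := w)
  obtain ⟨s₁, -, hs₁w⟩ := (hG x' z).exists_realizes (w := w)
  obtain ⟨s₂, -, hs₂w⟩ := (hG z y').exists_realizes (w := w)
  have hs₁e : s(x', y') ∉ s₁.edges := fun he => by
    have := le_walkWeight_of_mem_edges hw he
    linarith
  have hs₂e : s(x', y') ∉ s₂.edges := fun he => by
    have := le_walkWeight_of_mem_edges hw he
    linarith
  obtain ⟨hqe, hre⟩ := hp.1.not_mem_edges_of_append_cons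
  have hreal := hp.bypass_detour hw (s₁.append s₂) (by rw [walkWeight_append]; linarith)
  have hmem := Walk.edges_bypass_subset_edges _ (hall _ hreal)
  simp only [Walk.edges_append, List.mem_append] at hmem
  tauto

end Wdist

section CompleteGraph

variable {D : V → V → ℝ} (hsym : ∀ i j, D i j = D j i)
  (hpos : ∀ i j, i ≠ j → 0 < D i j)
  (htri : ∀ i j k, i ≠ j → j ≠ k → i ≠ k → D i j ≤ D i k + D k j)
include hsym hpos

lemma posWeights_top_lift : PosWeights (⊤ : SimpleGraph V) (Sym2.lift ⟨D, hsym⟩) := by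
  rintro ⟨i, j⟩ hij
  exact hpos i j hij

include htri

lemma le_walkWeight_top_lift {i j : V} (p : (⊤ : SimpleGraph V).Walk i j) (hij : i ≠ j) :
    D i j ≤ walkWeight ⊤ (Sym2.lift ⟨D, hsym⟩) p := by
  induction p with
  | nil => exact absurd rfl hij
  | @cons u k v h q ih =>
    rw [walkWeight_cons, Sym2.lift_mk]
    by_cases hkv : k = v
    · subst hkv
      linarith [walkWeight_nonneg (posWeights_top_lift hsym hpos) q]
    · linarith [htri u v k hij (Ne.symm hkv) h.ne, ih hkv]

variable [Finite V]

lemma wdist_top_lift {i j : V} (hij : i ≠ j) :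
    wdist (⊤ : SimpleGraph V) (Sym2.lift ⟨D, hsym⟩) i j = D i j := by
  have hadj : (⊤ : SimpleGraph V).Adj i j := hij
  refine le_antisymm (wdist_le_of_adj hadj) (le_csInf ⟨_, hadj.toWalk, hadj.isPath_toWalk, rfl⟩ ?_)
  rintro _ ⟨p, -, rfl⟩
  exact le_walkWeight_top_lift hsym hpos htri p hij

lemma usefulEdge_top_lift
    (hindec : ∀ i j, i ≠ j → ∀ z, z ≠ i → z ≠ j → D i j < D i z + D z j) {i j : V}
    (hij : i ≠ j) : UsefulEdge (⊤ : SimpleGraph V) (Sym2.lift ⟨D, hsym⟩) s(i, j) := by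
  refine ⟨i, j, hij, ?_⟩
  rintro p ⟨-, hpw⟩
  cases p with
  | nil => exact absurd rfl hij
  | @cons _ k _ h q =>
    by_cases hkj : k = j
    · subst hkj
      simp
    · rw [walkWeight_cons, Sym2.lift_mk, wdist_top_lift hsym hpos htri hij] at hpw
      linarith [le_walkWeight_top_lift hsym hpos htri q hkj, hindec i j hij k h.ne.symm hkj]

end CompleteGraph

theorem stmt_10_general {n : ℕ} (D : Fin n → Fin n → ℝ)
    (hsym : ∀ i j, D i j = D j i) (hpos : ∀ i j : Fin n, i ≠ j → 0 < D i j)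
    (htri : TriangleIneq D) :
    (∃ w : Sym2 (Fin n) → ℝ, PosWeights (⊤ : SimpleGraph (Fin n)) w ∧
        Pruned (⊤ : SimpleGraph (Fin n)) w ∧
        ∀ i j : Fin n, i ≠ j → wdist (⊤ : SimpleGraph (Fin n)) w i j = D i j) ↔
      ∀ i j : Fin n, i ≠ j → FIndec D i j := by
  constructor
  · rintro ⟨w, hw, hpr, hwD⟩ i j hij z hzi hzj
    have := (hpr s(i, j) hij).wdist_lt_add preconnected_top hw hzi hzj
    rwa [hwD i j hij, hwD i z hzi.symm, hwD z j hzj] at this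
  · intro hindec
    refine ⟨_, posWeights_top_lift hsym hpos, ?_, fun i j hij => wdist_top_lift hsym hpos htri hij⟩
    rintro ⟨i, j⟩ hij
    exact usefulEdge_top_lift hsym hpos htri hindec hij

/-- A family satisfying the triangle inequalities is co-graphlike iff all its elements are
indecomposable. -/
theorem stmt_10 {n : ℕ} (hn : 2 ≤ n) (D : Fin n → Fin n → ℝ)
    (hsym : ∀ i j, D i j = D j i) (hpos : ∀ i j : Fin n, i ≠ j → 0 < D i j)
    (htri : TriangleIneq D) :
    (∃ w : Sym2 (Fin n) → ℝ, PosWeights (⊤ : SimpleGraph (Fin n)) w ∧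
        Pruned (⊤ : SimpleGraph (Fin n)) w ∧
        ∀ i j : Fin n, i ≠ j → wdist (⊤ : SimpleGraph (Fin n)) w i j = D i j) ↔
      ∀ i j : Fin n, i ≠ j → FIndec D i j :=
  stmt_10_general D hsym hpos htri
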